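/- Let f ∈ ℚ[x] with f(0) ≠ 0 have no multiple roots, and suppose some root of f is not a root of rational. Let (G, R) be one of the pairs (G_f, R_f), (G_f^B, R_f^ℚ), (G_f^ℚ, R_f^ℚ). If G is transitive on the roots of f and the pair (G, H) is ℚ-trivial, where H is the stabilizer in G of a root of f, then the lattice R is trivial. -/

import Mathlib

noncomputable section

open Polynomial

/-- `z` is a root of rational: some positive power of `z` is rational. -/
def IsRootOfRational (z : ℂ) : Prop := ∃ k : ℕ, 0 < k ∧ ∃ q : ℚ, z ^ k = (q : ℂ)

/-- `z` is a rational number (viewed in `ℂ`). -/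
def IsRat (z : ℂ) : Prop := ∃ q : ℚ, z = (q : ℂ)

/-- The Galois-like group `G_f`: permutations of the (indexed) roots preserving all
multiplicative relations. -/
def GaloisLike {ι : Type*} [Fintype ι] (r : ι → ℂ) : Set (Equiv.Perm ι) :=
  {σ | ∀ v : ι → ℤ, (∏ i, r i ^ v i) = 1 → (∏ i, r (σ i) ^ v i) = 1}

/-- The Galois-like group `G_f^B`. -/
def GaloisLikeB {ι : Type*} [Fintype ι] (r : ι → ℂ) : Set (Equiv.Perm ι) :=
  {σ | ∀ v : ι → ℤ, IsRat (∏ i, r i ^ v i) → (∏ i, r (σ i) ^ v i) = ∏ i, r i ^ v i}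

/-- The Galois-like group `G_f^ℚ`. -/
def GaloisLikeQ {ι : Type*} [Fintype ι] (r : ι → ℂ) : Set (Equiv.Perm ι) :=
  {σ | ∀ v : ι → ℤ, IsRat (∏ i, r i ^ v i) → IsRat (∏ i, r (σ i) ^ v i)}

/-- The exponent lattice of the vector `w` is trivial. -/
def VecLatticeTrivial {ι : Type*} [Fintype ι] (w : ι → ℂ) : Prop :=
  ∀ u : ι → ℤ, (∏ i, w i ^ u i) = 1 → ∀ i j : ι, u i = u j

/-- The lattice `R_w^ℚ` of the vector `w` is trivial. -/
def VecLatticeQTrivial {ι : Type*} [Fintype ι] (w : ι → ℂ) : Prop :=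
  ∀ u : ι → ℤ, IsRat (∏ i, w i ^ u i) → ∀ i j : ι, u i = u j

/-- A subset `M ⊆ ℚ[G/H]` is ℚ-admissible: there is `μ ∈ ℚ[G]` with stabilizer
(under left multiplication) exactly `H` such that `mμ = 0` for all `m ∈ M`
(here `Σ_{g∈G} m(ḡ) • gμ = |H| ⋅ (mμ)`, so we express `mμ = 0` this way). -/
def IsQAdmissible {G : Type*} [Group G] (H : Subgroup G) (M : Set ((G ⧸ H) →₀ ℚ)) : Prop :=
  ∃ μ : MonoidAlgebra ℚ G,
    (∀ g : G, MonoidAlgebra.single g (1 : ℚ) * μ = μ ↔ g ∈ H) ∧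
    ∀ m ∈ M, (∑ᶠ g : G, m (QuotientGroup.mk g) • (MonoidAlgebra.single g (1 : ℚ) * μ)) = 0

/-- A ℚ-subspace of `ℚ[G/H]` is a `ℚ[G]`-submodule iff it is stable under the
permutation action of `G` on `G/H`. -/
def IsGStable {G : Type*} [Group G] (H : Subgroup G) (M : Submodule ℚ ((G ⧸ H) →₀ ℚ)) : Prop :=
  ∀ g : G, ∀ m ∈ M, Finsupp.mapDomain (fun x : G ⧸ H => g • x) m ∈ M

/-- The pair `(G,H)` is ℚ-trivial: the only ℚ-admissible `ℚ[G]`-submodules of `ℚ[G/H]`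
are `0` and `V₁` (the line of constant coefficient vectors). -/
def QTrivialPair {G : Type*} [Group G] (H : Subgroup G) : Prop :=
  ∀ M : Submodule ℚ ((G ⧸ H) →₀ ℚ), IsGStable H M →
    IsQAdmissible H (M : Set ((G ⧸ H) →₀ ℚ)) →
    M = ⊥ ∨ (M : Set ((G ⧸ H) →₀ ℚ)) = {m | ∃ a : ℚ, ∀ x, m x = a}

/-- The action of `G` on `G/H` is transitive. -/
def PairTransitive {G : Type*} [Group G] (H : Subgroup G) : Prop :=
  ∀ x y : G ⧸ H, ∃ g : G, g • x = y

/-- The action of `G` on `G/H` is doubly transitive. -/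
def PairDoublyTransitive {G : Type*} [Group G] (H : Subgroup G) : Prop :=
  ∀ x₁ x₂ y₁ y₂ : G ⧸ H, x₁ ≠ x₂ → y₁ ≠ y₂ → ∃ g : G, g • x₁ = y₁ ∧ g • x₂ = y₂

/-- The action of `G` on `G/H` is doubly homogeneous. -/
def PairDoublyHomogeneous {G : Type*} [Group G] (H : Subgroup G) : Prop :=
  ∀ x₁ x₂ y₁ y₂ : G ⧸ H, x₁ ≠ x₂ → y₁ ≠ y₂ →
    ∃ g : G, ({g • x₁, g • x₂} : Set (G ⧸ H)) = {y₁, y₂}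

/-- A set of permutations of `ι` acts transitively. -/
def SetTransitive {ι : Type*} (S : Set (Equiv.Perm ι)) : Prop :=
  ∀ i j : ι, ∃ σ ∈ S, σ i = j

/-- A set of permutations of `ι` acts doubly transitively. -/
def SetDoublyTransitive {ι : Type*} (S : Set (Equiv.Perm ι)) : Prop :=
  ∀ i j k l : ι, i ≠ j → k ≠ l → ∃ σ ∈ S, σ i = k ∧ σ j = l

/-- A set of permutations of `ι` acts doubly homogeneously. -/
def SetDoublyHomogeneous {ι : Type*} (S : Set (Equiv.Perm ι)) : Prop :=
  ∀ i j k l : ι, i ≠ j → k ≠ l → ∃ σ ∈ S, ({σ i, σ j} : Set ι) = {k, l}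


/-- The stabilizer, inside a subgroup `G` of the symmetric group on the roots, of the
root with index `i₀`. -/
def stabSubgroup {ι : Type*} (G : Subgroup (Equiv.Perm ι)) (i₀ : ι) : Subgroup ↥G where
  carrier := {σ : ↥G | (σ : Equiv.Perm ι) i₀ = i₀}
  one_mem' := rfl
  mul_mem' := by
    intro a b ha hb
    simp only [Set.mem_setOf_eq] at *
    simp [Equiv.Perm.mul_apply, ha, hb]
  inv_mem' := by
    intro a ha
    simp only [Set.mem_setOf_eq] at *
    have := congrArg (⇑(a : Equiv.Perm ι)⁻¹) ha
    simpa using this.symm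

/-!
Let `W ⊆ ℚⁿ` be the `ℚ`-span of the lattice `R`; it is stable under `G`. For a `G`-stable set
`Λ ⊆ ℚⁿ`, the orthogonal complement `Λ^⊥`, transported along `ℚⁿ ≅ ℚ[G/H]`, is a `ℚ[G]`-submodule,
and it is `ℚ`-admissible as soon as some `λ₀ ∈ Λ` takes the value `λ₀(i₀)` only at `i₀`: take
`μ = ∑_g λ₀(g⁻¹ i₀) g`, whose stabilizer is `H` and which is killed by `Λ^⊥` because
`∑_g m(g i₀) λ₀(t⁻¹ g i₀) = |H| ⟨m, λ₀ ∘ t⁻¹⟩`. So `ℚ`-triviality forces `Λ^⊥` to be `0` or to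
consist of constant vectors.

If no `e_x - e_{i₀}` with `x ≠ i₀` lies in `W`, a generic `λ₀ ∈ W^⊥` separates `i₀`, and
`W ⊆ W^⊥⊥` consists of constant vectors: `R` is trivial. Otherwise let `Λ` be the set of
differences `e_x - e_y` lying in `W`, which contains a separating `λ₀ = e_x - e_{i₀}`; the
indicator of the class of `i₀` under `e_x - e_y ∈ W` is orthogonal to `Λ` and nonzero, hence
constant, so `W` contains every `e_i - e_{i₀}` and thus the sum-zero hyperplane. Clearing
denominators, `k (n e_i - 1) ∈ R ⊆ R_f^ℚ` for some `k ≠ 0`; as `∏ r_i ∈ ℚ` by Vieta, `r_i^{kn}`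
is rational for every root `r_i`, contradicting the root that is not a root of rational.
-/

section DotOrthogonal

variable {K ι : Type*} [Field K] [Fintype ι]

def dotOrthogonal (Λ : Set (ι → K)) : Submodule K (ι → K) where
  carrier := {m | ∀ l ∈ Λ, m ⬝ᵥ l = 0}
  add_mem' ha hb l hl := by rw [add_dotProduct, ha l hl, hb l hl, add_zero]
  zero_mem' l _ := zero_dotProduct l
  smul_mem' c m hm l hl := by rw [smul_dotProduct, hm l hl, smul_zero]

theorem subset_dotOrthogonal_dotOrthogonal (Λ : Set (ι → K)) :
    Λ ⊆ dotOrthogonal (dotOrthogonal Λ : Set (ι → K)) := fun m hm l hl => by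
  rw [dotProduct_comm]; exact hl m hm

theorem exists_mem_dotOrthogonal_dotProduct_ne_zero [DecidableEq ι] {W : Submodule K (ι → K)}
    {v : ι → K} (hv : v ∉ W) : ∃ l ∈ dotOrthogonal W, l ⬝ᵥ v ≠ 0 := by
  obtain ⟨f, hfv, hWf⟩ := W.exists_le_ker_of_notMem hv
  have hf : ∀ u, (dotProductEquiv K ι).symm f ⬝ᵥ u = f u := fun u => by
    rw [← dotProductEquiv_apply_apply, LinearEquiv.apply_symm_apply]
  exact ⟨_, fun w hw => (hf w).trans (hWf hw), (hf v).trans_ne hfv⟩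

variable {Γ : Type*} [Group Γ] [MulAction Γ ι]

theorem comp_smul_mem_dotOrthogonal {Λ : Set (ι → K)}
    (hΛ : ∀ g : Γ, ∀ l ∈ Λ, (fun i => l (g • i)) ∈ Λ) (g : Γ) {m : ι → K}
    (hm : m ∈ dotOrthogonal Λ) : (fun i => m (g • i)) ∈ dotOrthogonal Λ := by
  intro l hl
  rw [← hm _ (hΛ g⁻¹ l hl)]
  exact Fintype.sum_equiv (MulAction.toPerm g) _ _ fun i => by simp

end DotOrthogonal

theorem sum_smul_eq_zero_of_sum_eq_zero {K Γ ι : Type*} [Field K] [CharZero K] [Group Γ]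
    [Fintype Γ] [MulAction Γ ι] [MulAction.IsPretransitive Γ ι] [Fintype ι] {F : ι → K}
    (hF : ∑ i, F i = 0) (i₀ : ι) : ∑ g : Γ, F (g • i₀) = 0 := by
  have hconst : ∀ i, ∑ g : Γ, F (g • i) = ∑ g : Γ, F (g • i₀) := fun i => by
    obtain ⟨h, rfl⟩ := MulAction.exists_smul_eq Γ i₀ i
    exact Fintype.sum_equiv (Equiv.mulRight h) _ _ fun g => by simp [mul_smul]
  have htotal : ∑ i, ∑ g : Γ, F (g • i) = 0 := by
    rw [Finset.sum_comm]
    refine Finset.sum_eq_zero fun g _ => ?_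
    rw [← hF]
    exact Fintype.sum_equiv (MulAction.toPerm g) _ _ fun i => rfl
  simp only [hconst, Finset.sum_const, Finset.card_univ] at htotal
  exact (smul_eq_zero.mp htotal).resolve_left (have : Nonempty ι := ⟨i₀⟩; Fintype.card_ne_zero)

section PermutationModule

open MulAction

variable {Γ ι : Type*} [Group Γ] [Fintype Γ] [MulAction Γ ι] [IsPretransitive Γ ι]

variable (Γ) in
noncomputable def quotientStabilizerEquiv (i₀ : ι) : Γ ⧸ stabilizer Γ i₀ ≃ ι :=
  Equiv.ofBijective (ofQuotientStabilizer Γ i₀) ⟨injective_ofQuotientStabilizer Γ i₀, fun i =>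
    let ⟨g, hg⟩ := exists_smul_eq Γ i₀ i; ⟨g, hg⟩⟩

variable (Γ) in
noncomputable def toPermModule (i₀ : ι) : (ι → ℚ) ≃ₗ[ℚ] (Γ ⧸ stabilizer Γ i₀ →₀ ℚ) :=
  LinearEquiv.funCongrLeft ℚ ℚ (quotientStabilizerEquiv Γ i₀) ≪≫ₗ
    (Finsupp.linearEquivFunOnFinite ℚ ℚ _).symm

theorem toPermModule_apply_mk (i₀ : ι) (m : ι → ℚ) (g : Γ) :
    toPermModule Γ i₀ m g = m (g • i₀) := by
  simp only [toPermModule, LinearEquiv.trans_apply, LinearEquiv.funCongrLeft_apply,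
    Finsupp.linearEquivFunOnFinite_symm_apply, LinearMap.funLeft_apply]
  rfl

theorem mapDomain_smul_toPermModule (i₀ : ι) (g : Γ) (m : ι → ℚ) :
    Finsupp.mapDomain (fun x => g • x) (toPermModule Γ i₀ m) =
      toPermModule Γ i₀ (fun i => m (g⁻¹ • i)) := by
  ext x
  induction x using QuotientGroup.induction_on with
  | H h =>
    change Finsupp.mapDomain (MulAction.toPerm g) _ _ = _
    rw [Finsupp.mapDomain_equiv_apply, MulAction.toPerm_symm_apply, MulAction.Quotient.smul_mk,
      toPermModule_apply_mk, toPermModule_apply_mk, smul_assoc]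

theorem isGStable_map_dotOrthogonal [Fintype ι] {i₀ : ι} {Λ : Set (ι → ℚ)}
    (hΛ : ∀ g : Γ, ∀ l ∈ Λ, (fun i => l (g • i)) ∈ Λ) :
    IsGStable (stabilizer Γ i₀) ((dotOrthogonal Λ).map (toPermModule Γ i₀).toLinearMap) := by
  rintro g _ ⟨m, hm, rfl⟩
  rw [LinearEquiv.coe_toLinearMap, mapDomain_smul_toPermModule]
  exact Submodule.mem_map_of_mem (comp_smul_mem_dotOrthogonal hΛ g⁻¹ hm)

theorem isQAdmissible_map_dotOrthogonal [Fintype ι] {i₀ : ι} {Λ : Set (ι → ℚ)}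
    (hΛ : ∀ g : Γ, ∀ l ∈ Λ, (fun i => l (g • i)) ∈ Λ) {l₀ : ι → ℚ} (h₀ : l₀ ∈ Λ)
    (hsep : ∀ i, l₀ i = l₀ i₀ → i = i₀) :
    IsQAdmissible (stabilizer Γ i₀)
      ((dotOrthogonal Λ).map (toPermModule Γ i₀).toLinearMap : Set (Γ ⧸ stabilizer Γ i₀ →₀ ℚ)) := by
  set μ : MonoidAlgebra ℚ Γ := .ofCoeff (Finsupp.equivFunOnFinite.symm fun s => l₀ (s⁻¹ • i₀))
  have hcoeff : ∀ g t : Γ, (MonoidAlgebra.single g 1 * μ).coeff t = l₀ (t⁻¹ • g • i₀) := by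
    intro g t
    simp [μ, mul_smul]
  refine ⟨μ, fun g => ⟨fun h => hsep _ ?_, fun hg => ?_⟩, ?_⟩
  · simpa [hcoeff, μ] using congr(($h).coeff 1)
  · ext t
    rw [hcoeff, mem_stabilizer_iff.mp hg]
    simp [μ]
  · rintro _ ⟨m, hm, rfl⟩
    ext t
    rw [finsum_eq_sum_of_fintype]
    simp only [LinearEquiv.coe_coe, toPermModule_apply_mk, MonoidAlgebra.coeff_sum,
      MonoidAlgebra.coeff_smul, Finsupp.coe_finsetSum, Finsupp.coe_smul, Finset.sum_apply,
      Pi.smul_apply, hcoeff, smul_eq_mul, MonoidAlgebra.coeff_zero, Finsupp.coe_zero, Pi.zero_apply]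
    exact sum_smul_eq_zero_of_sum_eq_zero (F := fun i => m i * l₀ (t⁻¹ • i))
      (hm _ (hΛ t⁻¹ l₀ h₀)) i₀

end PermutationModule

section QTrivial

open MulAction

variable {Γ ι : Type*} [Group Γ] [Fintype Γ] [MulAction Γ ι] [IsPretransitive Γ ι] [Fintype ι]
  {i₀ : ι}

theorem dotOrthogonal_eq_bot_or_forall_eq (hq : QTrivialPair (stabilizer Γ i₀))
    {Λ : Set (ι → ℚ)} (hΛ : ∀ g : Γ, ∀ l ∈ Λ, (fun i => l (g • i)) ∈ Λ) {l₀ : ι → ℚ}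
    (h₀ : l₀ ∈ Λ) (hsep : ∀ i, l₀ i = l₀ i₀ → i = i₀) :
    dotOrthogonal Λ = ⊥ ∨ ∀ m ∈ dotOrthogonal Λ, ∀ i j, m i = m j := by
  have hmem : ∀ m ∈ dotOrthogonal Λ,
      toPermModule Γ i₀ m ∈ (dotOrthogonal Λ).map (toPermModule Γ i₀).toLinearMap :=
    fun m hm => Submodule.mem_map_of_mem hm
  rcases hq _ (isGStable_map_dotOrthogonal hΛ) (isQAdmissible_map_dotOrthogonal hΛ h₀ hsep)
    with h | h
  · left
    refine (Submodule.eq_bot_iff _).mpr fun m hm => ?_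
    simpa [h] using hmem m hm
  · right
    intro m hm i j
    obtain ⟨a, ha⟩ : toPermModule Γ i₀ m ∈ {m : Γ ⧸ stabilizer Γ i₀ →₀ ℚ | ∃ a, ∀ x, m x = a} :=
      h ▸ hmem m hm
    obtain ⟨g, rfl⟩ := exists_smul_eq Γ i₀ i
    obtain ⟨g', rfl⟩ := exists_smul_eq Γ i₀ j
    rw [← toPermModule_apply_mk i₀ m g, ← toPermModule_apply_mk i₀ m g', ha, ha]

end QTrivial

theorem single_comp_smul {Γ ι M : Type*} [Group Γ] [MulAction Γ ι] [DecidableEq ι] [Zero M]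
    (x : ι) (a : M) (g : Γ) :
    (fun i => (Pi.single x a : ι → M) (g • i)) = Pi.single (g⁻¹ • x) a := by
  ext i
  simp only [Pi.single_apply, eq_inv_smul_iff]

section InvariantSubspace

open MulAction

variable {Γ ι : Type*} [Group Γ] [Fintype Γ] [MulAction Γ ι] [IsPretransitive Γ ι] [Fintype ι]
  [DecidableEq ι] {i₀ : ι}

theorem forall_single_sub_single_mem (hq : QTrivialPair (stabilizer Γ i₀))
    {W : Submodule ℚ (ι → ℚ)} (hW : ∀ g : Γ, ∀ w ∈ W, (fun i => w (g • i)) ∈ W) {x₀ : ι}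
    (hx₀ : x₀ ≠ i₀) (hx₀W : Pi.single x₀ 1 - Pi.single i₀ 1 ∈ W) :
    ∀ i, Pi.single i (1 : ℚ) - Pi.single i₀ 1 ∈ W := by
  classical
  set rel : ι → ι → Prop := fun x y => Pi.single x (1 : ℚ) - Pi.single y 1 ∈ W
  have rel_refl : ∀ x, rel x x := fun x => by simp [rel]
  have rel_trans : ∀ {x y z}, rel x y → rel y z → rel x z := fun hxy hyz => by
    simpa only [rel, sub_add_sub_cancel] using add_mem hxy hyz
  have rel_symm : ∀ {x y}, rel x y → rel y x := fun hxy => by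
    simpa only [rel, neg_sub] using neg_mem hxy
  set Λ : Set (ι → ℚ) := {l | l ∈ W ∧ ∃ x y, l = Pi.single x 1 - Pi.single y 1}
  have hΛ : ∀ g : Γ, ∀ l ∈ Λ, (fun i => l (g • i)) ∈ Λ := by
    rintro g _ ⟨hl, x, y, rfl⟩
    refine ⟨hW g _ hl, g⁻¹ • x, g⁻¹ • y, ?_⟩
    rw [← single_comp_smul, ← single_comp_smul]
    rfl
  set χ : ι → ℚ := fun x => if rel x i₀ then 1 else 0
  have hχ : χ ∈ dotOrthogonal Λ := by
    rintro _ ⟨hl, x, y, rfl⟩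
    have hiff : rel x i₀ ↔ rel y i₀ := ⟨rel_trans (rel_symm hl), rel_trans hl⟩
    rw [dotProduct_sub, dotProduct_single, dotProduct_single, mul_one, mul_one, sub_eq_zero]
    exact if_congr hiff rfl rfl
  have hχi₀ : χ i₀ = 1 := if_pos (rel_refl i₀)
  have hsep : ∀ i, (Pi.single x₀ 1 - Pi.single i₀ 1 : ι → ℚ) i =
      (Pi.single x₀ 1 - Pi.single i₀ 1 : ι → ℚ) i₀ → i = i₀ := by
    intro i hi
    by_contra hne
    simp only [Pi.sub_apply, Pi.single_apply, if_neg hne, if_neg hx₀.symm] at hi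
    split_ifs at hi <;> norm_num at hi
  rcases dotOrthogonal_eq_bot_or_forall_eq hq hΛ ⟨hx₀W, x₀, i₀, rfl⟩ hsep with h | h
  · rw [h] at hχ
    simpa [hχi₀] using congr_fun ((Submodule.mem_bot ℚ).mp hχ) i₀
  · exact fun i => by simpa [χ, rel_refl] using h χ hχ i i₀

theorem forall_eq_of_forall_single_sub_single_notMem (hq : QTrivialPair (stabilizer Γ i₀))
    {W : Submodule ℚ (ι → ℚ)} (hW : ∀ g : Γ, ∀ w ∈ W, (fun i => w (g • i)) ∈ W)
    (hW₀ : ∀ x ≠ i₀, Pi.single x (1 : ℚ) - Pi.single i₀ 1 ∉ W) : ∀ w ∈ W, ∀ i j, w i = w j := by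
  obtain ⟨l₀, hl₀, hsep⟩ := Module.Dual.exists_forall_mem_ne_zero_of_forall_exists
    (dotOrthogonal (W : Set (ι → ℚ)))
    (fun x : {x // x ≠ i₀} => dotProductEquiv ℚ ι (Pi.single x.1 1 - Pi.single i₀ 1))
    fun x => by
      obtain ⟨l, hl, hne⟩ := exists_mem_dotOrthogonal_dotProduct_ne_zero (hW₀ x.1 x.2)
      exact ⟨l, hl, by rwa [dotProductEquiv_apply_apply, dotProduct_comm]⟩
  have hW' : ∀ w ∈ W, w ∈ dotOrthogonal (dotOrthogonal (W : Set (ι → ℚ)) : Set (ι → ℚ)) :=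
    subset_dotOrthogonal_dotOrthogonal (W : Set (ι → ℚ))
  rcases dotOrthogonal_eq_bot_or_forall_eq hq (fun g l hl => comp_smul_mem_dotOrthogonal hW g hl)
      hl₀ (fun i hi => by_contra fun hne => hsep ⟨i, hne⟩ (by simp [hi]))
    with hbot | hconst
  · intro w hw i j
    rw [(Submodule.eq_bot_iff _).mp hbot w (hW' w hw), Pi.zero_apply, Pi.zero_apply]
  · exact fun w hw => hconst w (hW' w hw)

theorem forall_eq_or_forall_single_sub_single_mem (hq : QTrivialPair (stabilizer Γ i₀))
    {W : Submodule ℚ (ι → ℚ)} (hW : ∀ g : Γ, ∀ w ∈ W, (fun i => w (g • i)) ∈ W) :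
    (∀ w ∈ W, ∀ i j, w i = w j) ∨ ∀ i, Pi.single i (1 : ℚ) - Pi.single i₀ 1 ∈ W := by
  by_cases h : ∃ x ≠ i₀, Pi.single x (1 : ℚ) - Pi.single i₀ 1 ∈ W
  · obtain ⟨x₀, hx₀, hx₀W⟩ := h
    exact .inr (forall_single_sub_single_mem hq hW hx₀ hx₀W)
  · simp only [not_exists, not_and] at h
    exact .inl (forall_eq_of_forall_single_sub_single_notMem hq hW h)

end InvariantSubspace

theorem exists_zsmul_mem_of_mem_span {ι : Type*} {L : AddSubgroup (ι → ℤ)} {v : ι → ℤ}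
    (hv : (Int.castAddHom ℚ).compLeft ι v ∈
      Submodule.span ℚ (L.map ((Int.castAddHom ℚ).compLeft ι) : Set (ι → ℚ))) :
    ∃ k : ℤ, k ≠ 0 ∧ k • v ∈ L := by
  obtain ⟨y, hy, z, hvy⟩ := (IsLocalization.mem_span_iff (nonZeroDivisors ℤ)).mp hv
  rw [← SetLike.mem_coe, ← Submodule.coe_toAddSubgroup, Submodule.span_int_eq] at hy
  obtain ⟨u, hu, rfl⟩ := hy
  have hz : (z : ℤ) ≠ 0 := nonZeroDivisors.coe_ne_zero z
  refine ⟨z, hz, ?_⟩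
  suffices (z : ℤ) • v = u from this ▸ hu
  apply (Int.cast_injective (α := ℚ)).comp_left
  have := congr_arg (((z : ℤ) : ℚ) • ·) hvy
  simp only [IsFractionRing.mk'_eq_div, algebraMap_int_eq, eq_intCast, Int.cast_one, one_div,
    smul_smul, ne_eq, Int.cast_eq_zero, hz, not_false_eq_true, mul_inv_cancel₀, one_smul] at this
  funext i
  simpa using congr_fun this i

theorem mem_of_sum_eq_zero {K ι : Type*} [Field K] [Fintype ι] [DecidableEq ι]
    {W : Submodule K (ι → K)} {i₀ : ι}
    (hW : ∀ i, Pi.single i 1 - Pi.single i₀ 1 ∈ W) {v : ι → K} (hv : ∑ i, v i = 0) : v ∈ W := by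
  have : v = ∑ i, v i • (Pi.single i 1 - Pi.single i₀ 1) := by
    ext t
    simp [Finset.sum_apply, Pi.single_apply, mul_sub, Finset.sum_sub_distrib, hv]
  rw [this]
  exact sum_mem fun i _ => W.smul_mem _ (hW i)

theorem forall_eq_or_exists_zsmul_mem {Γ ι : Type*} [Group Γ] [Fintype Γ] [MulAction Γ ι]
    [MulAction.IsPretransitive Γ ι] [Fintype ι] [DecidableEq ι] {i₀ : ι}
    (hq : QTrivialPair (MulAction.stabilizer Γ i₀)) {L : AddSubgroup (ι → ℤ)}
    (hL : ∀ g : Γ, ∀ v ∈ L, (fun i => v (g • i)) ∈ L) :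
    (∀ u ∈ L, ∀ i j, u i = u j) ∨ ∀ v : ι → ℤ, ∑ i, v i = 0 → ∃ k : ℤ, k ≠ 0 ∧ k • v ∈ L := by
  set κ := (Int.castAddHom ℚ).compLeft ι
  set W := Submodule.span ℚ (L.map κ : Set (ι → ℚ))
  have hW : ∀ g : Γ, ∀ w ∈ W, (fun i => w (g • i)) ∈ W := by
    intro g
    suffices W ≤ W.comap (LinearMap.funLeft ℚ ℚ (g • ·)) from fun w hw => this hw
    refine Submodule.span_le.mpr ?_
    rintro _ ⟨u, hu, rfl⟩
    exact Submodule.subset_span ⟨_, hL g u hu, rfl⟩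
  refine (forall_eq_or_forall_single_sub_single_mem hq hW).imp (fun h u hu i j => ?_)
    (fun h v hv => exists_zsmul_mem_of_mem_span (mem_of_sum_eq_zero h ?_))
  · simpa [κ] using h (κ u) (Submodule.subset_span ⟨u, hu, rfl⟩) i j
  · simpa [κ] using congr_arg (Int.cast : ℤ → ℚ) hv

section ExponentLattice

variable {ι F : Type*} [Fintype ι] [Field F] {r : ι → F}

theorem prod_zpow_add (hr : ∀ i, r i ≠ 0) (u v : ι → ℤ) :
    ∏ i, r i ^ (u + v) i = (∏ i, r i ^ u i) * ∏ i, r i ^ v i := by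
  simp only [Pi.add_apply, zpow_add₀ (hr _), Finset.prod_mul_distrib]

theorem prod_zpow_neg (v : ι → ℤ) : ∏ i, r i ^ (-v) i = (∏ i, r i ^ v i)⁻¹ := by
  simp only [Pi.neg_apply, zpow_neg, Finset.prod_inv_distrib]

theorem prod_zpow_comp (σ : Equiv.Perm ι) (v : ι → ℤ) :
    ∏ i, r i ^ v (σ i) = ∏ i, r (σ⁻¹ i) ^ v i := by
  rw [← Equiv.prod_comp σ⁻¹]
  simp

theorem prod_zpow_single [DecidableEq ι] (i : ι) (k : ℤ) :
    ∏ t, r t ^ (Pi.single i k : ι → ℤ) t = r i ^ k := by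
  rw [Fintype.prod_eq_single i fun t ht => by simp [ht]]
  simp

variable (r)

/-- `exponentLattice r` is the paper's `R_f`; `exponentLatticeIn r K` with `K = ℚ` is `R_f^ℚ`. -/
def exponentLattice (hr : ∀ i, r i ≠ 0) : AddSubgroup (ι → ℤ) where
  carrier := {v | ∏ i, r i ^ v i = 1}
  add_mem' {u v} hu hv := by
    rw [Set.mem_ofPred_eq, prod_zpow_add hr, hu, hv, one_mul]
  zero_mem' := by simp
  neg_mem' {v} hv := by
    rw [Set.mem_ofPred_eq, prod_zpow_neg, hv, inv_one]

def exponentLatticeIn (K : Subfield F) (hr : ∀ i, r i ≠ 0) : AddSubgroup (ι → ℤ) where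
  carrier := {v | ∏ i, r i ^ v i ∈ K}
  add_mem' {u v} hu hv := by
    rw [Set.mem_ofPred_eq, prod_zpow_add hr]
    exact mul_mem hu hv
  zero_mem' := by simp [one_mem]
  neg_mem' {v} hv := by
    rw [Set.mem_ofPred_eq, prod_zpow_neg]
    exact inv_mem hv

theorem mem_exponentLatticeIn (K : Subfield F) (hr : ∀ i, r i ≠ 0) {v : ι → ℤ} :
    v ∈ exponentLatticeIn r K hr ↔ ∏ i, r i ^ v i ∈ K := Iff.rfl

theorem exponentLattice_le_exponentLatticeIn (K : Subfield F) (hr : ∀ i, r i ≠ 0) :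
    exponentLattice r hr ≤ exponentLatticeIn r K hr := fun _ (hv : _ = 1) =>
  show _ ∈ K from hv ▸ one_mem K

variable {r}

theorem forall_eq_of_le_exponentLatticeIn {Γ : Type*} [Group Γ] [Fintype Γ] [MulAction Γ ι]
    [MulAction.IsPretransitive Γ ι] [DecidableEq ι] {i₀ : ι}
    (hq : QTrivialPair (MulAction.stabilizer Γ i₀)) {K : Subfield F} (hr : ∀ i, r i ≠ 0)
    (hprod : ∏ i, r i ∈ K) {i₁ : ι} (hi₁ : ∀ N : ℤ, N ≠ 0 → r i₁ ^ N ∉ K)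
    {L : AddSubgroup (ι → ℤ)} (hL : ∀ g : Γ, ∀ v ∈ L, (fun i => v (g • i)) ∈ L)
    (hLK : L ≤ exponentLatticeIn r K hr) : ∀ u ∈ L, ∀ i j, u i = u j := by
  refine (forall_eq_or_exists_zsmul_mem hq hL).resolve_right fun h => ?_
  set c : ℤ := (Fintype.card ι : ℤ)
  obtain ⟨k, hk, hkL⟩ := h (Pi.single i₁ c - 1) (by simp [Finset.sum_sub_distrib, c])
  have hone : (1 : ι → ℤ) ∈ exponentLatticeIn r K hr := by
    simpa [mem_exponentLatticeIn] using hprod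
  have hsum := add_mem (hLK hkL) (zsmul_mem hone k)
  rw [← smul_add, sub_add_cancel, ← Pi.single_smul', smul_eq_mul] at hsum
  have hc : c ≠ 0 := Nat.cast_ne_zero.mpr (have : Nonempty ι := ⟨i₁⟩; Fintype.card_ne_zero)
  exact hi₁ (k * c) (mul_ne_zero hk hc)
    (by simpa [mem_exponentLatticeIn, prod_zpow_single] using hsum)

end ExponentLattice

section Roots

variable {F A ι : Type*} [Field F] [Field A] [Algebra F A] [Fintype ι] {f : F[X]} {r : ι → A}

theorem aroots_eq_map_of_injective (hf : f ≠ 0) (hinj : Function.Injective r)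
    (hroot : ∀ i, aeval (r i) f = 0) (hcard : Fintype.card ι = f.natDegree) :
    f.aroots A = Finset.univ.val.map r := by
  symm
  refine Multiset.eq_of_le_of_card_le
    ((Multiset.le_iff_subset (Finset.univ.nodup.map hinj)).mpr fun x hx => ?_) ?_
  · obtain ⟨i, -, rfl⟩ := Multiset.mem_map.mp hx
    exact mem_aroots.mpr ⟨hf, hroot i⟩
  · simpa [hcard] using card_roots' (f.map (algebraMap F A))

theorem prod_mem_fieldRange_of_injective [IsAlgClosed A] (hf : f ≠ 0)
    (hinj : Function.Injective r) (hroot : ∀ i, aeval (r i) f = 0)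
    (hcard : Fintype.card ι = f.natDegree) : ∏ i, r i ∈ (algebraMap F A).fieldRange := by
  have hvieta :=
    (IsAlgClosed.splits (f.map (algebraMap F A))).coeff_zero_eq_leadingCoeff_mul_prod_roots
  rw [coeff_map, leadingCoeff_map, natDegree_map, ← aroots_def,
    aroots_eq_map_of_injective hf hinj hroot hcard] at hvieta
  have hlc : (-1) ^ f.natDegree * algebraMap F A f.leadingCoeff ≠ 0 := by simp [hf]
  have hprod : ∏ i, r i = algebraMap F A (f.coeff 0) /
      ((-1) ^ f.natDegree * algebraMap F A f.leadingCoeff) := by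
    rw [hvieta, Finset.prod_eq_multiset_prod, mul_div_cancel_left₀ _ hlc]
  rw [hprod]
  exact div_mem (RingHom.mem_fieldRange_self _ _)
    (mul_mem (pow_mem (neg_mem (one_mem _)) _) (RingHom.mem_fieldRange_self _ _))

theorem ne_zero_of_aeval_eq_zero (hf0 : f.eval 0 ≠ 0) {z : A} (hz : aeval z f = 0) : z ≠ 0 := by
  rintro rfl
  rw [← coeff_zero_eq_aeval_zero', coeff_zero_eq_eval_zero, map_eq_zero] at hz
  exact hf0 hz

end Roots

section RootsOfRational

theorem isRat_iff_mem_fieldRange {z : ℂ} : IsRat z ↔ z ∈ (algebraMap ℚ ℂ).fieldRange := by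
  simp [IsRat, RingHom.mem_fieldRange, eq_comm]

theorem zpow_notMem_fieldRange_of_not_isRootOfRational {z : ℂ} (hz : ¬IsRootOfRational z)
    {N : ℤ} (hN : N ≠ 0) : z ^ N ∉ (algebraMap ℚ ℂ).fieldRange := by
  intro hzN
  have hpow : z ^ N.natAbs ∈ (algebraMap ℚ ℂ).fieldRange := by
    rcases Int.natAbs_eq N with h | h
    · rwa [h, zpow_natCast] at hzN
    · rw [h, zpow_neg, zpow_natCast] at hzN
      simpa using inv_mem hzN
  obtain ⟨q, hq⟩ := RingHom.mem_fieldRange.mp hpow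
  exact hz ⟨N.natAbs, Int.natAbs_pos.mpr hN, q, by simp [← hq]⟩

end RootsOfRational

theorem SetTransitive.isPretransitive {ι : Type*} {G : Subgroup (Equiv.Perm ι)}
    (h : SetTransitive (G : Set (Equiv.Perm ι))) : MulAction.IsPretransitive G ι :=
  ⟨fun i j => let ⟨σ, hσ, hij⟩ := h i j; ⟨⟨σ, hσ⟩, hij⟩⟩

section GaloisLike

variable {ι : Type*} [Fintype ι] {r : ι → ℂ}

theorem galoisLikeB_subset_galoisLikeQ : GaloisLikeB r ⊆ GaloisLikeQ r :=
  fun _ hσ v hv => hσ v hv ▸ hv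

theorem smul_mem_exponentLattice (hr : ∀ i, r i ≠ 0) {G : Subgroup (Equiv.Perm ι)}
    (hG : (G : Set (Equiv.Perm ι)) ⊆ GaloisLike r) (g : G) {v : ι → ℤ}
    (hv : v ∈ exponentLattice r hr) : (fun i => v (g • i)) ∈ exponentLattice r hr := by
  show ∏ i, r i ^ v ((g : Equiv.Perm ι) i) = 1
  rw [prod_zpow_comp]
  exact hG (inv_mem g.2) v hv

theorem smul_mem_exponentLatticeIn (hr : ∀ i, r i ≠ 0) {G : Subgroup (Equiv.Perm ι)}
    (hG : (G : Set (Equiv.Perm ι)) ⊆ GaloisLikeQ r) (g : G) {v : ι → ℤ}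
    (hv : v ∈ exponentLatticeIn r (algebraMap ℚ ℂ).fieldRange hr) :
    (fun i => v (g • i)) ∈ exponentLatticeIn r (algebraMap ℚ ℂ).fieldRange hr := by
  show ∏ i, r i ^ v ((g : Equiv.Perm ι) i) ∈ (algebraMap ℚ ℂ).fieldRange
  rw [prod_zpow_comp, ← isRat_iff_mem_fieldRange]
  exact hG (inv_mem g.2) v (isRat_iff_mem_fieldRange.mpr hv)

end GaloisLike

theorem statement16_general (f : Polynomial ℚ) (hf0 : f.eval 0 ≠ 0) (n : ℕ) (hn : n = f.natDegree)
    (r : Fin n → ℂ) (hinj : Function.Injective r)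
    (hroot : ∀ i, Polynomial.aeval (r i) f = 0)
    (hsome : ∃ i, ¬ IsRootOfRational (r i))
    (G : Subgroup (Equiv.Perm (Fin n)))
    (htrans : SetTransitive (G : Set (Equiv.Perm (Fin n))))
    (i₀ : Fin n) (hq : QTrivialPair (stabSubgroup G i₀)) :
    ((G : Set (Equiv.Perm (Fin n))) = GaloisLike r → VecLatticeTrivial r) ∧
    ((G : Set (Equiv.Perm (Fin n))) = GaloisLikeB r → VecLatticeQTrivial r) ∧
    ((G : Set (Equiv.Perm (Fin n))) = GaloisLikeQ r → VecLatticeQTrivial r) := by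
  classical
  have hf : f ≠ 0 := fun h => hf0 (by simp [h])
  have hr : ∀ i, r i ≠ 0 := fun i => ne_zero_of_aeval_eq_zero hf0 (hroot i)
  have hprod := prod_mem_fieldRange_of_injective hf hinj hroot (by simp [hn])
  obtain ⟨i₁, hi₁⟩ := hsome
  have := htrans.isPretransitive
  have trivial_of_le := fun {L} => forall_eq_of_le_exponentLatticeIn (L := L) hq hr hprod
    (fun _ => zpow_notMem_fieldRange_of_not_isRootOfRational hi₁)
  have qTrivial_of_subset (hG : (G : Set (Equiv.Perm (Fin n))) ⊆ GaloisLikeQ r) :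
      VecLatticeQTrivial r := fun u hu => trivial_of_le (smul_mem_exponentLatticeIn hr hG) le_rfl u
      (isRat_iff_mem_fieldRange.mp hu)
  exact ⟨fun hG => trivial_of_le (smul_mem_exponentLattice hr hG.le)
      (exponentLattice_le_exponentLatticeIn r _ hr),
    fun hG => qTrivial_of_subset (hG.le.trans galoisLikeB_subset_galoisLikeQ),
    fun hG => qTrivial_of_subset hG.le⟩

/-- Let `f ∈ ℚ[x]` with `f(0) ≠ 0` have no multiple roots, and suppose
some root of `f` is not a root of rational. Let `(G, R)` be one of the pairs
`(G_f, R_f)`, `(G_f^B, R_f^ℚ)`, `(G_f^ℚ, R_f^ℚ)`. If `G` is transitive on the roots and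
the pair `(G, H)` is ℚ-trivial, where `H` is the stabilizer in `G` of a root of `f`,
then the lattice `R` is trivial. -/
theorem statement16 (f : Polynomial ℚ) (hf0 : f.eval 0 ≠ 0) (n : ℕ) (hn : n = f.natDegree)
    (r : Fin n → ℂ) (hinj : Function.Injective r)
    (hroot : ∀ i, Polynomial.aeval (r i) f = 0)
    (hall : ∀ z : ℂ, Polynomial.aeval z f = 0 → ∃ i, r i = z)
    (hsome : ∃ i, ¬ IsRootOfRational (r i))
    (G : Subgroup (Equiv.Perm (Fin n)))
    (htrans : SetTransitive (G : Set (Equiv.Perm (Fin n))))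
    (i₀ : Fin n) (hq : QTrivialPair (stabSubgroup G i₀)) :
    ((G : Set (Equiv.Perm (Fin n))) = GaloisLike r → VecLatticeTrivial r) ∧
    ((G : Set (Equiv.Perm (Fin n))) = GaloisLikeB r → VecLatticeQTrivial r) ∧
    ((G : Set (Equiv.Perm (Fin n))) = GaloisLikeQ r → VecLatticeQTrivial r) :=
  statement16_general f hf0 n hn r hinj hroot hsome G htrans i₀ hq
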